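/- arXiv:1804.07711 — 4 statements merged into one kernel-verified Lean document; each statement's English description precedes it below -/
import Mathlib

section
/- The asymptotics of the number of type-I triangulations of the p-gon with n inner vertices: #T_{n,p} = (p(2p)!/(p!)^2) · (4^{n-1}(2p+3n-5)!!)/(n!(2p+n-1)!!) satisfies #T_{n,p} ~ c(p) λ_c^{-n} n^{-5/2} as n → ∞, where λ_c = 1/(12√3) and c(p) = 3^{p-2} p (2p)! / (4√(2π) (p!)^2). -/
/-- Number of type-I triangulations of the `p`-gon with `n` inner vertices (as a real). -/
noncomputable def numTri (n p : ℕ) : ℝ :=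
  ((p : ℝ) * (Nat.factorial (2*p) : ℝ) / (Nat.factorial p : ℝ)^2) *
    ((4 : ℝ)^(n-1) * (Nat.doubleFactorial (2*p + 3*n - 5) : ℝ)) /
    ((Nat.factorial n : ℝ) * (Nat.doubleFactorial (2*p + n - 1) : ℝ))

/-- The constant `c(p) = 3^{p-2} p (2p)! / (4√(2π) (p!)²)`. -/
noncomputable def cAsym (p : ℕ) : ℝ :=
  (3 : ℝ) ^ ((p : ℤ) - 2) * (p : ℝ) * (Nat.factorial (2*p) : ℝ) /
    (4 * Real.sqrt (2 * Real.pi) * (Nat.factorial p : ℝ)^2)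

/-!
After splitting by the parity of `n`, the double factorials in `#T_{n,p}` become ordinary
factorials: for `n = 2k + 2` one gets `(6k + 2p + 1)! (k + p)! / ((3k + p)! (2k + 2)! (2k + 2p + 1)!)`,
for `n = 2k + 3` one gets `(3k + p + 2)! / ((2k + 3)! (k + p + 1)!)`, up to explicit factors.
Each factorial `(ak + c)!` is `(ak)! (ak)^c` up to a factor tending to `1`, and Stirling's formula
gives `(6k)! k! / ((3k)! (2k)!²) ~ 108^k / (2√(πk))` and `(3k)! / ((2k)! k!) ~ (√3/2) (27/4)^k / √(πk)`.
The polynomial factors and the exponentials then combine exactly into `c(p) (12√3)^n n^{-5/2}`.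
-/

open Filter Real Nat Topology Stirling

lemma tendsto_of_tendsto_even_of_tendsto_odd {α : Type*} {u : ℕ → α} {l : Filter α}
    (h_even : Tendsto (fun k => u (2 * k)) atTop l)
    (h_odd : Tendsto (fun k => u (2 * k + 1)) atTop l) : Tendsto u atTop l := by
  intro s hs
  obtain ⟨N₁, h₁⟩ := eventually_atTop.1 (h_even hs)
  obtain ⟨N₂, h₂⟩ := eventually_atTop.1 (h_odd hs)
  refine eventually_atTop.2 ⟨2 * (N₁ + N₂) + 1, fun n hn => ?_⟩
  obtain ⟨k, rfl | rfl⟩ := Nat.even_or_odd' n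
  · exact h₁ k (by omega)
  · exact h₂ k (by omega)

lemma tendsto_add_div_self_rpow (c s : ℝ) :
    Tendsto (fun k : ℕ => ((k + c) / k : ℝ) ^ s) atTop (𝓝 1) := by
  have h_base : Tendsto (fun k : ℕ => 1 + c * (k : ℝ)⁻¹) atTop (𝓝 1) := by
    simpa using (tendsto_inv_atTop_nhds_zero_nat.const_mul c).const_add 1
  refine Tendsto.congr' ?_ (by simpa using h_base.rpow_const (p := s) (Or.inl one_ne_zero))
  filter_upwards [eventually_ne_atTop 0] with k hk
  rw [add_div, div_self (by exact_mod_cast hk), div_eq_mul_inv]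

lemma rpow_five_div_two {x : ℝ} (hx : 0 ≤ x) : x ^ (5 / 2 : ℝ) = x ^ 2 * √x := by
  rw [sqrt_eq_rpow, ← rpow_natCast, ← rpow_add' hx (by norm_num)]
  norm_num

section Factorial

lemma doubleFactorial_two_mul_add_one_eq (m : ℕ) :
    ((2 * m + 1)‼ : ℝ) = (2 * m + 1)! / (2 ^ m * m !) := by
  rw [eq_div_iff (by positivity), factorial_eq_mul_doubleFactorial, doubleFactorial_two_mul]
  push_cast
  ring

noncomputable def factorialShiftRatio (c m : ℕ) : ℝ := (m + c)! / (m ! * (m : ℝ) ^ c)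

lemma factorial_add_eq {m : ℕ} (hm : m ≠ 0) (c : ℕ) :
    ((m + c)! : ℝ) = factorialShiftRatio c m * m ! * (m : ℝ) ^ c := by
  rw [factorialShiftRatio, mul_assoc, div_mul_cancel₀]
  positivity

lemma tendsto_factorialShiftRatio (c : ℕ) :
    Tendsto (factorialShiftRatio c) atTop (𝓝 1) := by
  induction c with
  | zero =>
    refine tendsto_const_nhds.congr fun m => ?_
    simp [factorialShiftRatio, factorial_ne_zero]
  | succ c ih =>
    have h_step : Tendsto (fun m : ℕ => 1 + (c + 1 : ℝ) * (m : ℝ)⁻¹) atTop (𝓝 1) := by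
      simpa using (tendsto_inv_atTop_nhds_zero_nat.const_mul ((c : ℝ) + 1)).const_add 1
    refine Tendsto.congr' ?_ (by simpa using ih.mul h_step)
    filter_upwards [eventually_ne_atTop 0] with m hm
    rw [factorialShiftRatio, factorialShiftRatio, ← add_assoc, factorial_succ]
    push_cast
    field_simp
    ring

lemma tendsto_factorialShiftRatio_mul (c : ℕ) {a : ℕ} (ha : 0 < a) :
    Tendsto (fun k => factorialShiftRatio c (a * k)) atTop (𝓝 1) :=
  (tendsto_factorialShiftRatio c).comp (tendsto_id.const_mul_atTop' ha)

end Factorial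

section Stirling

lemma stirlingSeq_ne_zero {m : ℕ} (hm : m ≠ 0) : stirlingSeq m ≠ 0 := by
  obtain ⟨n, rfl⟩ := exists_eq_succ_of_ne_zero hm
  exact (stirlingSeq'_pos n).ne'

lemma tendsto_stirlingSeq_mul {a : ℕ} (ha : 0 < a) :
    Tendsto (fun k => stirlingSeq (a * k)) atTop (𝓝 √π) :=
  tendsto_stirlingSeq_sqrt_pi.comp (tendsto_id.const_mul_atTop' ha)

lemma factorial_eq_stirlingSeq_mul {m : ℕ} (hm : m ≠ 0) :
    (m ! : ℝ) = stirlingSeq m * √(2 * m) * (m / exp 1) ^ m := by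
  rw [stirlingSeq, mul_assoc, div_mul_cancel₀]
  positivity

lemma factorial_mul_eq_stirlingSeq_mul {a k : ℕ} (ha : a ≠ 0) (hk : k ≠ 0) :
    ((a * k)! : ℝ) =
      stirlingSeq (a * k) * √(2 * a) * √k * (a ^ a) ^ k * ((k / exp 1) ^ k) ^ a := by
  rw [factorial_eq_stirlingSeq_mul (by positivity)]
  push_cast
  rw [mul_div_assoc, mul_pow, ← mul_assoc 2, sqrt_mul (by positivity)]
  simp only [← pow_mul]
  ring

lemma tendsto_factorial_three_mul_div :
    Tendsto (fun k : ℕ => ((3 * k)! : ℝ) * 4 ^ k * √(π * k) / ((2 * k)! * k ! * 27 ^ k))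
      atTop (𝓝 (√3 / 2)) := by
  have h_lim : Tendsto (fun k : ℕ => stirlingSeq (3 * k) / (stirlingSeq (2 * k) * stirlingSeq k)
      * (√π * √3 / 2)) atTop (𝓝 (√π / (√π * √π) * (√π * √3 / 2))) :=
    ((tendsto_stirlingSeq_mul three_pos).div ((tendsto_stirlingSeq_mul two_pos).mul
      tendsto_stirlingSeq_sqrt_pi) (by positivity)).mul_const _
  rw [show √π / (√π * √π) * (√π * √3 / 2) = √3 / 2 by field_simp] at h_lim
  refine h_lim.congr' ?_
  filter_upwards [eventually_ne_atTop 0] with k hk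
  rw [factorial_mul_eq_stirlingSeq_mul three_ne_zero hk,
    factorial_mul_eq_stirlingSeq_mul two_ne_zero hk, factorial_eq_stirlingSeq_mul hk]
  have := stirlingSeq_ne_zero (m := 2 * k) (by omega)
  have := stirlingSeq_ne_zero hk
  have : √(k : ℝ) ≠ 0 := by positivity
  have hy : (k / exp 1) ^ k ≠ 0 := by positivity
  generalize (k / exp 1) ^ k = y at hy ⊢
  push_cast
  simp (disch := positivity) only [sqrt_mul', sqrt_sq, show (2 * 2 : ℝ) = 2 ^ 2 by norm_num]
  field_simp
  norm_num
  ring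

lemma tendsto_factorial_six_mul_div :
    Tendsto (fun k : ℕ => ((6 * k)! : ℝ) * k ! * √(π * k) / ((3 * k)! * (2 * k)! ^ 2 * 108 ^ k))
      atTop (𝓝 (1 / 2)) := by
  have h_lim : Tendsto (fun k : ℕ => stirlingSeq (6 * k) * stirlingSeq k /
      (stirlingSeq (3 * k) * stirlingSeq (2 * k) ^ 2) * (√π / 2)) atTop
      (𝓝 (√π * √π / (√π * √π ^ 2) * (√π / 2))) :=
    (((tendsto_stirlingSeq_mul (by norm_num)).mul tendsto_stirlingSeq_sqrt_pi).div
      ((tendsto_stirlingSeq_mul three_pos).mul ((tendsto_stirlingSeq_mul two_pos).pow 2))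
      (by positivity)).mul_const _
  rw [show √π * √π / (√π * √π ^ 2) * (√π / 2) = 1 / 2 by field_simp] at h_lim
  refine h_lim.congr' ?_
  filter_upwards [eventually_ne_atTop 0] with k hk
  rw [factorial_mul_eq_stirlingSeq_mul (by norm_num) hk,
    factorial_mul_eq_stirlingSeq_mul three_ne_zero hk,
    factorial_mul_eq_stirlingSeq_mul two_ne_zero hk, factorial_eq_stirlingSeq_mul hk]
  have := stirlingSeq_ne_zero (m := 2 * k) (by omega)
  have := stirlingSeq_ne_zero (m := 3 * k) (by omega)
  have := stirlingSeq_ne_zero hk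
  have : √(k : ℝ) ≠ 0 := by positivity
  have hy : (k / exp 1) ^ k ≠ 0 := by positivity
  generalize (k / exp 1) ^ k = y at hy ⊢
  push_cast
  simp (disch := positivity) only [sqrt_mul', sqrt_sq, show (2 * 2 : ℝ) = 2 ^ 2 by norm_num,
    show (2 * 6 : ℝ) = 2 ^ 2 * 3 by norm_num]
  field_simp
  rw [show ((6 : ℝ) ^ 6) ^ k = (3 ^ 3) ^ k * (2 ^ 2) ^ k * (2 ^ 2) ^ k * 108 ^ k by
    simp only [← mul_pow]; norm_num]
  ring

end Stirling

section Triangulations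

noncomputable def numTriRatio (p n : ℕ) : ℝ :=
  numTri n p / (cAsym p * (12 * √3) ^ n * (n : ℝ) ^ (-(5 / 2) : ℝ))

lemma cAsym_eq (p : ℕ) : cAsym p = 3 ^ p * p * (2 * p)! / (36 * √2 * √π * p ! ^ 2) := by
  rw [cAsym, zpow_sub₀ (by norm_num), zpow_natCast, sqrt_mul (by norm_num)]
  field_simp
  ring

lemma numTri_two_mul_add_two (k p : ℕ) :
    numTri (2 * k + 2) p = p * (2 * p)! / p ! ^ 2 * 2 ^ (2 * k + 2) * (6 * k + (2 * p + 1))! *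
      (k + p)! / ((3 * k + p)! * (2 * k + 2)! * (2 * k + (2 * p + 1))!) := by
  rw [numTri, show 2 * p + 3 * (2 * k + 2) - 5 = 2 * (3 * k + p) + 1 by omega,
    show 2 * p + (2 * k + 2) - 1 = 2 * (k + p) + 1 by omega, show 2 * k + 2 - 1 = 2 * k + 1 by omega,
    doubleFactorial_two_mul_add_one_eq, doubleFactorial_two_mul_add_one_eq,
    show 2 * (3 * k + p) + 1 = 6 * k + (2 * p + 1) by ring,
    show 2 * (k + p) + 1 = 2 * k + (2 * p + 1) by ring]
  field_simp
  rw [show (4 : ℝ) = 2 ^ 2 by norm_num, ← pow_mul]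
  ring

lemma numTri_two_mul_add_three (k p : ℕ) :
    numTri (2 * k + 3) p = p * (2 * p)! / p ! ^ 2 * 2 ^ (6 * k + 5) * (3 * k + (p + 2))! /
      ((2 * k + 3)! * (k + (p + 1))!) := by
  rw [numTri, show 2 * p + 3 * (2 * k + 3) - 5 = 2 * (3 * k + (p + 2)) by omega,
    show 2 * p + (2 * k + 3) - 1 = 2 * (k + (p + 1)) by omega,
    show 2 * k + 3 - 1 = 2 * k + 2 by omega, doubleFactorial_two_mul, doubleFactorial_two_mul]
  push_cast
  field_simp
  rw [show (4 : ℝ) = 2 ^ 2 by norm_num, ← pow_mul]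
  ring

lemma numTriRatio_two_mul_add_two {p k : ℕ} (hp : p ≠ 0) (hk : k ≠ 0) :
    numTriRatio p (2 * k + 2) =
      factorialShiftRatio (2 * p + 1) (6 * k) * factorialShiftRatio p k /
        (factorialShiftRatio p (3 * k) * factorialShiftRatio 2 (2 * k) *
          factorialShiftRatio (2 * p + 1) (2 * k)) *
      ((6 * k)! * k ! * √(π * k) / ((3 * k)! * (2 * k)! ^ 2 * 108 ^ k)) * 2 *
      ((k + 1) / k : ℝ) ^ (5 / 2 : ℝ) := by
  have hk' : (k : ℝ) ≠ 0 := by exact_mod_cast hk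
  rw [numTriRatio, numTri_two_mul_add_two, cAsym_eq, factorial_add_eq (by omega),
    factorial_add_eq hk, factorial_add_eq (by omega), factorial_add_eq (by omega),
    factorial_add_eq (by omega), div_rpow (by positivity) (by positivity),
    rpow_five_div_two (by positivity), rpow_five_div_two (by positivity), rpow_neg (by positivity),
    rpow_five_div_two (by positivity), sqrt_mul pi_pos.le,
    show (2 * k + 2 : ℕ) = (2 : ℝ) * (k + 1) by push_cast; ring, sqrt_mul (by norm_num),
    show (12 * √3) ^ (2 * k + 2) = (2 ^ 4 * 3 ^ 3 : ℝ) ^ (k + 1) by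
      rw [show 2 * k + 2 = 2 * (k + 1) by ring, pow_mul, mul_pow, sq_sqrt (by norm_num)]
      norm_num,
    show (108 : ℝ) = 2 ^ 2 * 3 ^ 3 by norm_num]
  push_cast
  simp only [mul_pow, ← pow_mul, show (6 : ℝ) = 2 * 3 by norm_num]
  have : √(k : ℝ) ≠ 0 := by positivity
  have : √((k : ℝ) + 1) ≠ 0 := by positivity
  field_simp
  ring_nf
  rw [sq_sqrt zero_le_two]
  ring

lemma numTriRatio_two_mul_add_three {p k : ℕ} (hp : p ≠ 0) (hk : k ≠ 0) :
    numTriRatio p (2 * k + 3) =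
      factorialShiftRatio (p + 2) (3 * k) /
        (factorialShiftRatio 3 (2 * k) * factorialShiftRatio (p + 1) k) *
      ((3 * k)! * 4 ^ k * √(π * k) / ((2 * k)! * k ! * 27 ^ k)) * (2 / √3) *
      ((k + 3 / 2) / k : ℝ) ^ (5 / 2 : ℝ) := by
  have hk' : (k : ℝ) ≠ 0 := by exact_mod_cast hk
  rw [numTriRatio, numTri_two_mul_add_three, cAsym_eq, factorial_add_eq (by omega),
    factorial_add_eq hk, factorial_add_eq (by omega), div_rpow (by positivity) (by positivity),
    rpow_five_div_two (by positivity), rpow_five_div_two (by positivity), rpow_neg (by positivity),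
    rpow_five_div_two (by positivity), sqrt_mul pi_pos.le,
    show (2 * k + 3 : ℕ) = (2 : ℝ) * (k + 3 / 2) by push_cast; ring, sqrt_mul (by norm_num),
    show (12 * √3) ^ (2 * k + 3) = (2 ^ 4 * 3 ^ 3 : ℝ) ^ (k + 1) * (12 * √3) by
      rw [show 2 * k + 3 = 2 * (k + 1) + 1 by ring, pow_succ, pow_mul, mul_pow (12 : ℝ),
        sq_sqrt (by norm_num)]
      norm_num,
    show (4 : ℝ) = 2 ^ 2 by norm_num, show (27 : ℝ) = 3 ^ 3 by norm_num]
  push_cast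
  simp only [mul_pow, ← pow_mul]
  have : √(k : ℝ) ≠ 0 := by positivity
  have : √((k : ℝ) + 3 / 2) ≠ 0 := by positivity
  field_simp
  ring_nf
  rw [sq_sqrt zero_le_two]
  ring

lemma tendsto_numTriRatio_two_mul_add_two {p : ℕ} (hp : p ≠ 0) :
    Tendsto (fun k => numTriRatio p (2 * k + 2)) atTop (𝓝 1) := by
  have h_lim := ((((tendsto_factorialShiftRatio_mul (2 * p + 1) (by norm_num : 0 < 6)).mul
    (tendsto_factorialShiftRatio p)).div (((tendsto_factorialShiftRatio_mul p three_pos).mul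
      (tendsto_factorialShiftRatio_mul 2 two_pos)).mul
        (tendsto_factorialShiftRatio_mul (2 * p + 1) two_pos)) (by norm_num)).mul
    tendsto_factorial_six_mul_div |>.mul_const 2).mul (tendsto_add_div_self_rpow 1 (5 / 2))
  rw [show 1 * 1 / (1 * 1 * 1) * (1 / 2) * 2 * 1 = (1 : ℝ) by norm_num] at h_lim
  refine h_lim.congr' ?_
  filter_upwards [eventually_ne_atTop 0] with k hk
  exact (numTriRatio_two_mul_add_two hp hk).symm

lemma tendsto_numTriRatio_two_mul_add_three {p : ℕ} (hp : p ≠ 0) :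
    Tendsto (fun k => numTriRatio p (2 * k + 3)) atTop (𝓝 1) := by
  have h_lim := (((tendsto_factorialShiftRatio_mul (p + 2) three_pos).div
    ((tendsto_factorialShiftRatio_mul 3 two_pos).mul (tendsto_factorialShiftRatio (p + 1)))
      (by norm_num)).mul tendsto_factorial_three_mul_div |>.mul_const (2 / √3)).mul
    (tendsto_add_div_self_rpow (3 / 2) (5 / 2))
  rw [show 1 / (1 * 1) * (√3 / 2) * (2 / √3) * 1 = (1 : ℝ) by field_simp] at h_lim
  refine h_lim.congr' ?_
  filter_upwards [eventually_ne_atTop 0] with k hk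
  exact (numTriRatio_two_mul_add_three hp hk).symm

end Triangulations

/-- `#T_{n,p} ~ c(p) λ_c^{-n} n^{-5/2}` as `n → ∞`, with `λ_c = 1/(12√3)`. -/
theorem stmt_2 (p : ℕ) (hp : 1 ≤ p) :
    Filter.Tendsto
      (fun n : ℕ =>
        numTri n p / (cAsym p * (12 * Real.sqrt 3)^n * (n : ℝ) ^ (-(5/2) : ℝ)))
      Filter.atTop (nhds 1) := by
  have hp₀ : p ≠ 0 := by omega
  refine tendsto_of_tendsto_even_of_tendsto_odd (u := numTriRatio p) ?_ ?_
  · refine (tendsto_add_atTop_iff_nat 1).1 ?_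
    simpa [mul_add] using tendsto_numTriRatio_two_mul_add_two hp₀
  · refine (tendsto_add_atTop_iff_nat 1).1 ?_
    simpa [mul_add, add_assoc] using tendsto_numTriRatio_two_mul_add_three hp₀
end

section
/- Let h ∈ (0, 1/4], λ = h/(1+8h)^{3/2}. Then 1/√(1+8h) + 2(8 + 1/h)·W_λ(h/(1+8h)) = 1, where W_λ(x) = (λ/2)·((1 - ((1+8h)/h)x)·√(1-4(1+8h)x) - 1 + x/λ). -/
/-!
At `x = h/(1+8h)` the factor `1 - ((1+8h)/h) x` vanishes, so `W x = (x - λ)/2`, and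
`(8 + 1/h)(x - λ) = 1 - (1+8h) λ / h = 1 - 1/√(1+8h)` because `(1+8h)^{3/2} = (1+8h)√(1+8h)`.
-/

lemma Real.rpow_three_halves_eq_mul_sqrt {a : ℝ} (ha : 0 < a) :
    a ^ ((3 : ℝ) / 2) = a * √a := by
  rw [Real.sqrt_eq_rpow, show (3 : ℝ) / 2 = 1 + 1 / 2 by norm_num, Real.rpow_add ha,
    Real.rpow_one]

lemma halfplane_generating_function_eval {h lam : ℝ} (hpos : 0 < h) (hlam : lam ≠ 0) :
    (lam / 2) * ((1 - ((1 + 8*h)/h) * (h / (1 + 8*h))) * √(1 - 4*(1 + 8*h)*(h / (1 + 8*h)))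
      - 1 + (h / (1 + 8*h)) / lam) = (h / (1 + 8*h) - lam) / 2 := by
  have hvanish : 1 - ((1 + 8*h)/h) * (h / (1 + 8*h)) = 0 := by field_simp; ring
  rw [hvanish, zero_mul, zero_sub]
  field_simp
  ring

/-- the peeling transition probabilities of `H_λ` sum to `1`:
`1/√(1+8h) + 2(8+1/h) W_λ(h/(1+8h)) = 1`. -/
theorem stmt_5 (h : ℝ) (hh : h ∈ Set.Ioc (0 : ℝ) (1/4)) (lam : ℝ)
    (hlam : lam = h / (1 + 8*h) ^ ((3 : ℝ)/2)) (W : ℝ → ℝ)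
    (hW : ∀ x, W x =
      (lam / 2) * ((1 - ((1 + 8*h)/h) * x) * Real.sqrt (1 - 4*(1 + 8*h)*x) - 1 + x / lam)) :
    1 / Real.sqrt (1 + 8*h) + 2 * (8 + 1/h) * W (h / (1 + 8*h)) = 1 := by
  obtain ⟨hpos, -⟩ := hh
  have hs : 0 < 1 + 8*h := by positivity
  have hlam0 : lam ≠ 0 := by rw [hlam]; positivity
  rw [hW, halfplane_generating_function_eval hpos hlam0, hlam,
    Real.rpow_three_halves_eq_mul_sqrt hs]
  field_simp
  ring
end

section
/- Let h ∈ (0,1/4] and g(x) = 1/x - (1-x)(1-√(1-4hx))/(2hx^2) for x ∈ (0,1]. Then g extends continuously to x=0 with g(0) = 1 - h, g(1) = 1, g is the generating function of a probability distribution on nonnegative integers (i.e., g has nonnegative Taylor coefficients at 0 summing to 1), and g'(1) = (1 - 2h - √(1-4h))/(2h). -/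
/-!
Put `s = √(1 - 4hx)`. Since `1 - s = 4hx / (1 + s)`, the formula for `g` simplifies to
`g x = 1 - 4h(1 - x) / (1 + s)²`. This closed form is continuous, it gives the values at `0` and at `1`,
and because `g x - 1 = (x - 1) · 4h / (1 + s)²` with a continuous second factor, it also gives the
derivative at `1`.

The coefficients come from the Catalan generating function `c(z) = ∑ Cₙ zⁿ = (1 - √(1 - 4z)) / (2z)`:
we have `g x = c(hx) - (c(hx) - 1) / x`, so the coefficients of `g` are `Cᵢ hⁱ - Cᵢ₊₁ hⁱ⁺¹`.
These are nonnegative because `Cᵢ₊₁ ≤ 4 Cᵢ` and `h ≤ 1/4`. The identity for `c` holds up to the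
boundary point `z = 1/4`. The partial sums are bounded by the smaller root `r` of `z t² - t + 1 = 0`
(induction using the convolution recurrence), so the sum `L` exists, solves the same quadratic and
satisfies `L ≤ r`, which forces `L = r`.
-/

open Finset

theorem catalan_succ_le_four_mul (n : ℕ) : catalan (n + 1) ≤ 4 * catalan n := by
  have hrec : (n + 2) * catalan (n + 1) = (4 * n + 2) * catalan n := by
    apply Nat.eq_of_mul_eq_mul_left n.succ_pos
    calc (n + 1) * ((n + 2) * catalan (n + 1))
        = (n + 1) * ((n + 1 + 1) * catalan (n + 1)) := by ring
      _ = (n + 1) * (n + 1).centralBinom := by rw [succ_mul_catalan_eq_centralBinom]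
      _ = 2 * (2 * n + 1) * ((n + 1) * catalan n) := by
        rw [Nat.succ_mul_centralBinom_succ, succ_mul_catalan_eq_centralBinom]
      _ = (n + 1) * ((4 * n + 2) * catalan n) := by ring
  refine Nat.le_of_mul_le_mul_left (c := n + 2) ?_ (by omega)
  rw [hrec]
  nlinarith

theorem sum_range_sum_antidiagonal_le_mul {R : Type*} [CommSemiring R] [PartialOrder R]
    [IsOrderedRing R] {a b : ℕ → R} (ha : ∀ i, 0 ≤ a i) (hb : ∀ j, 0 ≤ b j) (N : ℕ) :
    ∑ n ∈ range N, ∑ p ∈ antidiagonal n, a p.1 * b p.2 ≤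
      (∑ i ∈ range N, a i) * ∑ j ∈ range N, b j := by
  have hfiber : ∀ n ∈ range N,
      antidiagonal n = {p ∈ range N ×ˢ range N | p.1 + p.2 = n} := by
    intro n hn
    ext ⟨i, j⟩
    simp only [mem_range, HasAntidiagonal.mem_antidiagonal, mem_filter, mem_product] at hn ⊢
    omega
  rw [sum_congr rfl fun n hn => by rw [hfiber n hn], sum_mul_sum, ← sum_product']
  exact sum_fiberwise_le_sum_of_sum_fiber_nonneg fun _ _ =>
    sum_nonneg fun _ _ => mul_nonneg (ha _) (hb _)

theorem catalan_succ_mul_pow_succ {R : Type*} [CommSemiring R] (z : R) (n : ℕ) :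
    (catalan (n + 1) : R) * z ^ (n + 1) =
      z * ∑ p ∈ antidiagonal n, (catalan p.1 * z ^ p.1) * (catalan p.2 * z ^ p.2) := by
  rw [catalan_succ', Nat.cast_sum, sum_mul, mul_sum]
  refine sum_congr rfl fun p hp => ?_
  rw [← HasAntidiagonal.mem_antidiagonal.mp hp]
  push_cast
  ring

theorem sum_range_catalan_mul_pow_le {z r : ℝ} (hz : 0 ≤ z) (hr : z * r ^ 2 + 1 ≤ r) (N : ℕ) :
    ∑ n ∈ range N, (catalan n : ℝ) * z ^ n ≤ r := by
  have ha : ∀ n, 0 ≤ (catalan n : ℝ) * z ^ n := fun n => by positivity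
  induction N with
  | zero => simp only [range_zero, sum_empty]; nlinarith
  | succ N ih =>
    have hS : 0 ≤ ∑ n ∈ range N, (catalan n : ℝ) * z ^ n := sum_nonneg fun n _ => ha n
    calc ∑ n ∈ range (N + 1), (catalan n : ℝ) * z ^ n
        = z * ∑ n ∈ range N, ∑ p ∈ antidiagonal n,
            ((catalan p.1 : ℝ) * z ^ p.1) * (catalan p.2 * z ^ p.2) + 1 := by
          simp [sum_range_succ', catalan_succ_mul_pow_succ, mul_sum]
      _ ≤ z * (∑ n ∈ range N, (catalan n : ℝ) * z ^ n) ^ 2 + 1 := by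
          gcongr
          rw [sq]
          exact sum_range_sum_antidiagonal_le_mul ha ha N
      _ ≤ z * r ^ 2 + 1 := by gcongr
      _ ≤ r := hr

theorem mul_sq_add_one_eq_of_hasSum_catalan_mul_pow {z L : ℝ}
    (hL : HasSum (fun n => (catalan n : ℝ) * z ^ n) L) : z * L ^ 2 + 1 = L := by
  have hnorm : Summable fun n => ‖(catalan n : ℝ) * z ^ n‖ := by
    simpa only [Real.norm_eq_abs] using hL.summable.abs
  have hshift := (hasSum_nat_add_iff' 1).mpr hL
  have hrec := hshift.tsum_eq
  simp only [catalan_succ_mul_pow_succ, Finset.sum_range_one, catalan_zero, Nat.cast_one,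
    pow_zero, mul_one, tsum_mul_left] at hrec
  rw [← tsum_mul_tsum_eq_tsum_sum_antidiagonal_of_summable_norm hnorm hnorm, hL.tsum_eq] at hrec
  linear_combination hrec

theorem hasSum_catalan_mul_pow {z : ℝ} (hz0 : 0 < z) (hz : z ≤ 1 / 4) :
    HasSum (fun n => (catalan n : ℝ) * z ^ n) ((1 - √(1 - 4 * z)) / (2 * z)) := by
  set s := √(1 - 4 * z)
  have hs0 : 0 ≤ s := Real.sqrt_nonneg _
  have hs2 : s ^ 2 = 1 - 4 * z := Real.sq_sqrt (by linarith)
  have hr : z * ((1 - s) / (2 * z)) ^ 2 + 1 = (1 - s) / (2 * z) := by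
    field_simp
    linear_combination hs2
  have hbound := sum_range_catalan_mul_pow_le hz0.le hr.le
  have hL := (summable_of_sum_range_le (fun n => by positivity) hbound).hasSum
  set L := ∑' n, (catalan n : ℝ) * z ^ n
  have hLr : L ≤ (1 - s) / (2 * z) := Real.tsum_le_of_sum_range_le (fun n => by positivity) hbound
  have hsq : (1 - 2 * z * L) ^ 2 = s ^ 2 := by
    rw [hs2]
    linear_combination 4 * z * mul_sq_add_one_eq_of_hasSum_catalan_mul_pow hL
  have hnonneg : 0 ≤ 1 - 2 * z * L := by
    rw [le_div_iff₀ (by positivity)] at hLr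
    nlinarith
  have hroot : 1 - 2 * z * L = s := (pow_left_inj₀ hnonneg hs0 two_ne_zero).mp hsq
  convert hL using 1
  field_simp
  linarith

theorem hasDerivAt_add_sub_mul {𝕜 : Type*} [NontriviallyNormedField 𝕜] {φ : 𝕜 → 𝕜} {a : 𝕜}
    (b : 𝕜) (hφ : ContinuousAt φ a) : HasDerivAt (fun y => b + (y - a) * φ y) (φ a) a := by
  rw [hasDerivAt_iff_tendsto_slope]
  refine (hφ.tendsto.mono_left nhdsWithin_le_nhds).congr' ?_
  filter_upwards [self_mem_nhdsWithin] with y hy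
  rw [slope_def_field, sub_self, zero_mul, add_zero, add_sub_cancel_left,
    mul_div_cancel_left₀ _ (sub_ne_zero.mpr hy)]

noncomputable def offspringGF (h x : ℝ) : ℝ :=
  1 - 4 * h * (1 - x) / (1 + √(1 - 4 * h * x)) ^ 2

noncomputable def offspringProb (h : ℝ) (i : ℕ) : ℝ :=
  catalan i * h ^ i - catalan (i + 1) * h ^ (i + 1)

section Offspring

variable {h x : ℝ}

theorem one_div_sub_eq_offspringGF (hh : h ≠ 0) (hx : x ≠ 0) (hhx : 4 * h * x ≤ 1) :
    1 / x - (1 - x) * (1 - √(1 - 4 * h * x)) / (2 * h * x ^ 2) = offspringGF h x := by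
  unfold offspringGF
  set s := √(1 - 4 * h * x)
  have hs0 : 0 ≤ s := Real.sqrt_nonneg _
  have hs2 : s ^ 2 = 1 - 4 * h * x := Real.sq_sqrt (by linarith)
  field_simp
  linear_combination (1 - x) * (2 * h * x + 1 + s) * hs2

theorem continuous_offspringGF (h : ℝ) : Continuous (offspringGF h) := by
  unfold offspringGF
  refine continuous_const.sub (Continuous.div (by fun_prop) (by fun_prop) fun x => ?_)
  have := Real.sqrt_nonneg (1 - 4 * h * x)
  positivity

theorem offspringGF_zero (h : ℝ) : offspringGF h 0 = 1 - h := by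
  norm_num [offspringGF]

theorem offspringGF_one (h : ℝ) : offspringGF h 1 = 1 := by
  simp [offspringGF]

-- For `h = 1/4`, `y = 1` is the branch point of `√(1 - 4hy)`: the derivative there is two-sided
-- only because `Real.sqrt` vanishes on negatives.
theorem hasDerivAt_offspringGF_one (hh : 0 < h) (hh4 : h ≤ 1 / 4) :
    HasDerivAt (offspringGF h) ((1 - 2 * h - √(1 - 4 * h)) / (2 * h)) 1 := by
  have hs2 : √(1 - 4 * h) ^ 2 = 1 - 4 * h := Real.sq_sqrt (by linarith)
  have hslope : ContinuousAt (fun y => 4 * h / (1 + √(1 - 4 * h * y)) ^ 2) 1 :=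
    ContinuousAt.div (by fun_prop) (by fun_prop) (by positivity)
  have hG : offspringGF h = fun y => 1 + (y - 1) * (4 * h / (1 + √(1 - 4 * h * y)) ^ 2) := by
    ext y
    rw [offspringGF]
    ring
  rw [hG]
  refine (hasDerivAt_add_sub_mul 1 hslope).congr_deriv ?_
  rw [mul_one]
  field_simp
  linear_combination (√(1 - 4 * h) + 1 + 2 * h) * hs2

theorem offspringProb_nonneg (hh : 0 ≤ h) (hh4 : h ≤ 1 / 4) (i : ℕ) :
    0 ≤ offspringProb h i := by
  have hC : (catalan (i + 1) : ℝ) ≤ 4 * catalan i := by exact_mod_cast catalan_succ_le_four_mul i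
  have hCh : (catalan (i + 1) : ℝ) * h ≤ catalan i := by
    nlinarith [(catalan (i + 1)).cast_nonneg (α := ℝ)]
  rw [offspringProb, pow_succ]
  nlinarith [pow_nonneg hh i]

theorem hasSum_offspringProb_mul_pow (hh : 0 < h) (hx : 0 < x) (hhx : 4 * h * x ≤ 1) :
    HasSum (fun i => offspringProb h i * x ^ i) (offspringGF h x) := by
  have hc := hasSum_catalan_mul_pow (mul_pos hh hx) (by linarith)
  have hc_succ := ((hasSum_nat_add_iff' 1).mpr hc).div_const x
  simp only [Finset.sum_range_one, catalan_zero, Nat.cast_one, pow_zero, mul_one, ← mul_assoc]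
    at hc hc_succ
  have hval : (1 - √(1 - 4 * h * x)) / (2 * h * x) - ((1 - √(1 - 4 * h * x)) / (2 * h * x) - 1) / x
      = offspringGF h x := by
    rw [← one_div_sub_eq_offspringGF hh.ne' hx.ne' hhx]
    field_simp
    ring
  rw [← hval]
  refine (hc.sub hc_succ).congr_fun fun i => ?_
  simp only [offspringProb]
  field_simp
  ring

end Offspring

/-- `g(x) = 1/x - (1-x)(1-√(1-4hx))/(2hx²)` extends continuously to `0`
with value `1-h`, satisfies `g(1)=1`, is the generating function of a probability
distribution on ℕ, and has (one-sided) derivative `(1-2h-√(1-4h))/(2h)` at `1`. -/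
theorem stmt_6 (h : ℝ) (hh : h ∈ Set.Ioc (0 : ℝ) (1/4))
    (g : ℝ → ℝ)
    (hg : ∀ x : ℝ, x ≠ 0 →
      g x = 1/x - (1 - x) * (1 - Real.sqrt (1 - 4*h*x)) / (2*h*x^2)) :
    (Filter.Tendsto g (nhdsWithin 0 (Set.Ioi 0)) (nhds (1 - h))) ∧
    g 1 = 1 ∧
    (∃ θ : ℕ → ℝ, (∀ i, 0 ≤ θ i) ∧ HasSum θ 1 ∧
      ∀ x ∈ Set.Ioc (0 : ℝ) 1, HasSum (fun i : ℕ => θ i * x ^ i) (g x)) ∧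
    HasDerivWithinAt g ((1 - 2*h - Real.sqrt (1 - 4*h)) / (2*h)) (Set.Iic 1) 1 := by
  obtain ⟨hh0, hh4⟩ := hh
  have hgG : ∀ x, x ≠ 0 → 4 * h * x ≤ 1 → g x = offspringGF h x := fun x hx hhx =>
    (hg x hx).trans (one_div_sub_eq_offspringGF hh0.ne' hx hhx)
  have hg1 : g 1 = 1 := by rw [hgG 1 one_ne_zero (by linarith), offspringGF_one]
  have hsum : ∀ x ∈ Set.Ioc (0 : ℝ) 1, HasSum (fun i => offspringProb h i * x ^ i) (g x) := by
    rintro x ⟨hx0, hx1⟩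
    have hhx : 4 * h * x ≤ 1 := by nlinarith
    rw [hgG x hx0.ne' hhx]
    exact hasSum_offspringProb_mul_pow hh0 hx0 hhx
  refine ⟨?_, hg1, ⟨offspringProb h, offspringProb_nonneg hh0.le hh4, ?_, hsum⟩, ?_⟩
  · rw [← offspringGF_zero h]
    refine (((continuous_offspringGF h).tendsto 0).mono_left nhdsWithin_le_nhds).congr' ?_
    filter_upwards [Ioo_mem_nhdsGT one_pos] with x ⟨hx0, hx1⟩
    exact (hgG x hx0.ne' (by nlinarith)).symm
  · simpa only [one_pow, mul_one, hg1] using hsum 1 ⟨one_pos, le_rfl⟩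
  · refine (hasDerivAt_offspringGF_one hh0 hh4).hasDerivWithinAt.congr_of_eventuallyEq ?_
      (by rw [hg1, offspringGF_one])
    filter_upwards [self_mem_nhdsWithin, nhdsWithin_le_nhds (Ioi_mem_nhds one_pos)]
      with y (hy1 : y ≤ 1) (hy0 : 0 < y)
    exact hgG y hy0.ne' (by nlinarith)
end

section
/- Let θ be an offspring distribution with generating function g satisfying g'(1) ≤ 1 and θ(0) > 0, and write x_r = g^{∘r}(0). Then the sequence (x_{r+1} - x_r)_{r≥0} is nonincreasing, and for every fixed k ≥ 1, (x_{r-k+1} - x_{r-k})/(x_{r+1} - x_r) → 1/((g^{∘k})'(1)) as r → ∞. -/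
open Filter Topology

/-- Sandwich for `y^(n+1) - x^(n+1)`. -/
lemma aux_pow_succ {x y : ℝ} (hx : 0 ≤ x) (hxy : x ≤ y) (n : ℕ) :
    ((n : ℝ) + 1) * x ^ n * (y - x) ≤ y ^ (n + 1) - x ^ (n + 1) ∧
      y ^ (n + 1) - x ^ (n + 1) ≤ ((n : ℝ) + 1) * y ^ n * (y - x) := by
  induction n with
  | zero => constructor <;> simp [pow_succ] <;> nlinarith
  | succ n ih =>
    have hy : 0 ≤ y := hx.trans hxy
    have hpow : x ^ (n + 1) ≤ y ^ (n + 1) := pow_le_pow_left₀ hx hxy (n + 1)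
    have h1 : y ^ (n + 2) - x ^ (n + 2)
        = y * (y ^ (n + 1) - x ^ (n + 1)) + x ^ (n + 1) * (y - x) := by ring
    have hA := mul_le_mul_of_nonneg_left ih.1 hx
    have hB := mul_le_mul_of_nonneg_left ih.2 hy
    have hC : x * (y ^ (n + 1) - x ^ (n + 1)) ≤ y * (y ^ (n + 1) - x ^ (n + 1)) :=
      mul_le_mul_of_nonneg_right hxy (by linarith)
    have hD : x ^ (n + 1) * (y - x) ≤ y ^ (n + 1) * (y - x) :=
      mul_le_mul_of_nonneg_right hpow (by linarith)
    have e1 : x * (((n : ℝ) + 1) * x ^ n * (y - x)) = ((n : ℝ) + 1) * x ^ (n + 1) * (y - x) := by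
      ring
    have e2 : y * (((n : ℝ) + 1) * y ^ n * (y - x)) = ((n : ℝ) + 1) * y ^ (n + 1) * (y - x) := by
      ring
    constructor
    · push_cast
      linarith [hA, hC, e1, h1]
    · push_cast
      linarith [hB, hD, e2, h1]

/-- Sandwich for `y^n - x^n`, general `n`. -/
lemma aux_pow {x y : ℝ} (hx : 0 ≤ x) (hxy : x ≤ y) (n : ℕ) :
    (n : ℝ) * x ^ (n - 1) * (y - x) ≤ y ^ n - x ^ n ∧
      y ^ n - x ^ n ≤ (n : ℝ) * y ^ (n - 1) * (y - x) := by
  cases n with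
  | zero => simp
  | succ n =>
    have h := aux_pow_succ hx hxy n
    simpa [Nat.succ_sub_one] using h

/-- Strict inequality `1 - z^j < j (1 - z)` for `j ≥ 2`, `0 ≤ z < 1`. -/
lemma aux_strict {z : ℝ} (hz0 : 0 ≤ z) (hz1 : z < 1) {j : ℕ} (hj : 2 ≤ j) :
    1 - z ^ j < (j : ℝ) * (1 - z) := by
  have h := geom_sum_mul z j
  have hsum : ∑ i ∈ Finset.range j, z ^ i < (j : ℝ) := by
    calc ∑ i ∈ Finset.range j, z ^ i < ∑ i ∈ Finset.range j, (1 : ℝ) := by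
          refine Finset.sum_lt_sum (fun i _ => pow_le_one₀ hz0 hz1.le) ?_
          exact ⟨1, Finset.mem_range.2 (by omega), by simpa using hz1⟩
      _ = (j : ℝ) := by simp
  have he : 1 - z ^ j = (1 - z) * ∑ i ∈ Finset.range j, z ^ i := by linear_combination h
  rw [he]
  calc (1 - z) * ∑ i ∈ Finset.range j, z ^ i < (1 - z) * (j : ℝ) :=
        mul_lt_mul_of_pos_left hsum (by linarith)
    _ = (j : ℝ) * (1 - z) := mul_comm _ _

/-- From `d (r+1) / d r → m` (with `d r ≠ 0`, `m ≠ 0`) deduce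
`d (r - k) / d r → 1 / m ^ k`. -/
lemma aux_ratio {d : ℕ → ℝ} {m : ℝ} (hd : ∀ r, d r ≠ 0) (hm : m ≠ 0)
    (h : Tendsto (fun r => d (r + 1) / d r) atTop (𝓝 m)) (k : ℕ) :
    Tendsto (fun r => d (r - k) / d r) atTop (𝓝 (1 / m ^ k)) := by
  induction k with
  | zero =>
    have : (fun r : ℕ => d (r - 0) / d r) = fun _ => (1 : ℝ) :=
      funext fun r => by simp [div_self (hd r)]
    rw [this]
    simpa using (tendsto_const_nhds : Tendsto (fun _ : ℕ => (1 : ℝ)) atTop (𝓝 1))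
  | succ k ih =>
    have hinv : Tendsto (fun r => (d (r + 1) / d r)⁻¹) atTop (𝓝 m⁻¹) := h.inv₀ hm
    have h2 : Tendsto (fun r => d (r - k) / d (r + 1)) atTop (𝓝 (1 / m ^ k * m⁻¹)) := by
      have heq : (fun r => d (r - k) / d (r + 1))
          = fun r => d (r - k) / d r * (d (r + 1) / d r)⁻¹ := by
        funext r
        rw [inv_div, div_mul_div_comm, mul_comm (d (r - k)) (d r),
          mul_div_mul_left _ _ (hd r)]
      rw [heq]
      exact ih.mul hinv
    have h3 : Tendsto (fun r : ℕ => d ((r - 1) - k) / d ((r - 1) + 1)) atTop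
        (𝓝 (1 / m ^ k * m⁻¹)) := h2.comp (tendsto_sub_atTop_nat 1)
    have h4 : Tendsto (fun r : ℕ => d (r - (k + 1)) / d r) atTop (𝓝 (1 / m ^ k * m⁻¹)) := by
      refine h3.congr' ?_
      filter_upwards [eventually_ge_atTop 1] with r hr
      rw [Nat.sub_sub, Nat.sub_add_cancel hr, add_comm 1 k]
    have : 1 / m ^ (k + 1) = 1 / m ^ k * m⁻¹ := by
      rw [pow_succ, one_div, mul_inv, one_div]
    rw [this]
    exact h4

/-- for a (sub)critical offspring distribution `θ` with `θ(0) > 0` and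
generating function `g`, writing `x_r = g^{∘r}(0)`, the sequence `(x_{r+1} - x_r)` is
nonincreasing, and for each fixed `k ≥ 1`,
`(x_{r-k+1} - x_{r-k})/(x_{r+1} - x_r) → 1/(g^{∘k})'(1) = 1/m^k` as `r → ∞`. -/
theorem stmt_14 (θ : ℕ → ℝ) (hpos : ∀ i, 0 ≤ θ i) (hsum : HasSum θ 1) (h0 : 0 < θ 0)
    (m : ℝ) (hm : HasSum (fun i : ℕ => (i : ℝ) * θ i) m) (hsub : m ≤ 1)
    (g : ℝ → ℝ) (hg : ∀ x : ℝ, g x = ∑' i : ℕ, θ i * x ^ i) :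
    (∀ r s : ℕ, r ≤ s → g^[s+1] 0 - g^[s] 0 ≤ g^[r+1] 0 - g^[r] 0) ∧
    ∀ k : ℕ, 1 ≤ k →
      Filter.Tendsto
        (fun r : ℕ => (g^[r-k+1] 0 - g^[r-k] 0) / (g^[r+1] 0 - g^[r] 0))
        Filter.atTop (nhds (1 / m ^ k)) := by
  have Sθ : Summable θ := hsum.summable
  have Sm : Summable (fun i : ℕ => (i : ℝ) * θ i) := hm.summable
  have hm0 : 0 ≤ m := by
    rw [← hm.tsum_eq]
    exact tsum_nonneg fun i => mul_nonneg (Nat.cast_nonneg i) (hpos i)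
  -- summability of the series defining g and its "derivative"
  have Sg : ∀ z : ℝ, 0 ≤ z → z ≤ 1 → Summable (fun i : ℕ => θ i * z ^ i) := by
    intro z hz0 hz1
    refine Sθ.of_nonneg_of_le (fun i => mul_nonneg (hpos i) (pow_nonneg hz0 i)) (fun i => ?_)
    exact mul_le_of_le_one_right (hpos i) (pow_le_one₀ hz0 hz1)
  have SD : ∀ z : ℝ, 0 ≤ z → z ≤ 1 → Summable (fun i : ℕ => (i : ℝ) * θ i * z ^ (i - 1)) := by
    intro z hz0 hz1
    refine Sm.of_nonneg_of_le
      (fun i => mul_nonneg (mul_nonneg (Nat.cast_nonneg i) (hpos i)) (pow_nonneg hz0 _))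
      (fun i => ?_)
    exact mul_le_of_le_one_right (mul_nonneg (Nat.cast_nonneg i) (hpos i))
      (pow_le_one₀ hz0 hz1)
  -- D is the derivative series
  set D : ℝ → ℝ := fun z => ∑' i : ℕ, (i : ℝ) * θ i * z ^ (i - 1) with hD
  have g1 : g 1 = 1 := by
    rw [hg 1]
    simpa using hsum.tsum_eq
  have hdiff : ∀ a b : ℝ, 0 ≤ a → a ≤ 1 → 0 ≤ b → b ≤ 1 →
      g b - g a = ∑' i : ℕ, θ i * (b ^ i - a ^ i) := by
    intro a b ha0 ha1 hb0 hb1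
    rw [hg a, hg b, ← Summable.tsum_sub (Sg b hb0 hb1) (Sg a ha0 ha1)]
    exact (tsum_congr fun i => by ring).symm
  -- key sandwich inequality
  have key : ∀ a b : ℝ, 0 ≤ a → a ≤ b → b ≤ 1 →
      D a * (b - a) ≤ g b - g a ∧ g b - g a ≤ D b * (b - a) := by
    intro a b ha0 hab hb1
    have ha1 : a ≤ 1 := hab.trans hb1
    have hb0 : 0 ≤ b := ha0.trans hab
    rw [hdiff a b ha0 ha1 hb0 hb1]
    constructor
    · rw [hD]
      rw [← tsum_mul_right]
      refine Summable.tsum_le_tsum (fun i => ?_) ((SD a ha0 ha1).mul_right _)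
        (Summable.congr ((Sg b hb0 hb1).sub (Sg a ha0 ha1)) (fun i => by ring))
      have := (aux_pow ha0 hab i).1
      calc (i : ℝ) * θ i * a ^ (i - 1) * (b - a)
          = θ i * ((i : ℝ) * a ^ (i - 1) * (b - a)) := by ring
        _ ≤ θ i * (b ^ i - a ^ i) := mul_le_mul_of_nonneg_left (by linarith) (hpos i)
    · rw [hD, ← tsum_mul_right]
      refine Summable.tsum_le_tsum (fun i => ?_)
        (Summable.congr ((Sg b hb0 hb1).sub (Sg a ha0 ha1)) (fun i => by ring))
        ((SD b hb0 hb1).mul_right _)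
      have := (aux_pow ha0 hab i).2
      calc θ i * (b ^ i - a ^ i) ≤ θ i * ((i : ℝ) * b ^ (i - 1) * (b - a)) :=
            mul_le_mul_of_nonneg_left (by linarith) (hpos i)
        _ = (i : ℝ) * θ i * b ^ (i - 1) * (b - a) := by ring
  have Dnn : ∀ z : ℝ, 0 ≤ z → 0 ≤ D z := by
    intro z hz0
    exact tsum_nonneg fun i =>
      mul_nonneg (mul_nonneg (Nat.cast_nonneg i) (hpos i)) (pow_nonneg hz0 _)
  have Dle : ∀ z : ℝ, 0 ≤ z → z ≤ 1 → D z ≤ m := by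
    intro z hz0 hz1
    rw [← hm.tsum_eq]
    refine Summable.tsum_le_tsum (fun i => ?_) (SD z hz0 hz1) Sm
    exact mul_le_of_le_one_right (mul_nonneg (Nat.cast_nonneg i) (hpos i))
      (pow_le_one₀ hz0 hz1)
  -- basic facts about x r := g^[r] 0
  have hg0 : ∀ z : ℝ, 0 ≤ z → 0 ≤ g z := by
    intro z hz0
    rw [hg z]
    exact tsum_nonneg fun i => mul_nonneg (hpos i) (pow_nonneg hz0 i)
  have hgle1 : ∀ z : ℝ, 0 ≤ z → z ≤ 1 → g z ≤ 1 := by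
    intro z hz0 hz1
    have h := (key z 1 hz0 hz1 le_rfl).1
    have := Dnn z hz0
    nlinarith [mul_nonneg this (sub_nonneg.2 hz1)]
  have hgmono : ∀ a b : ℝ, 0 ≤ a → a ≤ b → b ≤ 1 → g a ≤ g b := by
    intro a b ha0 hab hb1
    have h := (key a b ha0 hab hb1).1
    nlinarith [mul_nonneg (Dnn a ha0) (sub_nonneg.2 hab)]
  have hx01 : ∀ r : ℕ, 0 ≤ g^[r] 0 ∧ g^[r] 0 ≤ 1 := by
    intro r
    induction r with
    | zero => simp
    | succ r ih =>
      rw [Function.iterate_succ_apply']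
      exact ⟨hg0 _ ih.1, hgle1 _ ih.1 ih.2⟩
  have hxstep : ∀ r : ℕ, g^[r] 0 ≤ g^[r + 1] 0 := by
    intro r
    induction r with
    | zero => simpa using hg0 0 le_rfl
    | succ r ih =>
      rw [Function.iterate_succ_apply', Function.iterate_succ_apply']
      exact hgmono _ _ (hx01 r).1 ih (hx01 (r + 1)).2
  have hxmono : Monotone (fun r : ℕ => g^[r] 0) := monotone_nat_of_le_succ hxstep
  -- d r is the sequence of increments
  have dnn : ∀ r : ℕ, 0 ≤ g^[r + 1] 0 - g^[r] 0 := fun r => sub_nonneg.2 (hxstep r)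
  -- the sandwich for increments
  have dkey : ∀ r : ℕ,
      D (g^[r] 0) * (g^[r + 1] 0 - g^[r] 0) ≤ g^[r + 2] 0 - g^[r + 1] 0 ∧
      g^[r + 2] 0 - g^[r + 1] 0 ≤ D (g^[r + 1] 0) * (g^[r + 1] 0 - g^[r] 0) := by
    intro r
    have h := key (g^[r] 0) (g^[r + 1] 0) (hx01 r).1 (hxstep r) (hx01 (r + 1)).2
    rw [← Function.iterate_succ_apply' g (r + 1) 0, ← Function.iterate_succ_apply' g r 0] at h
    exact h
  have dstep : ∀ r : ℕ, g^[r + 2] 0 - g^[r + 1] 0 ≤ g^[r + 1] 0 - g^[r] 0 := by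
    intro r
    have h := (dkey r).2
    have hDle := Dle (g^[r + 1] 0) (hx01 (r + 1)).1 (hx01 (r + 1)).2
    nlinarith [dnn r, dnn (r + 1), Dnn (g^[r + 1] 0) (hx01 (r + 1)).1]
  have danti : Antitone (fun r : ℕ => g^[r + 1] 0 - g^[r] 0) :=
    antitone_nat_of_succ_le fun n => dstep n
  refine ⟨fun r s h => danti h, fun k hk => ?_⟩
  -- second part; first handle the degenerate case m = 0
  rcases eq_or_lt_of_le hm0 with hmz | hmpos
  · -- m = 0 : θ is concentrated at 0, so g ≡ 1
    have hθz : ∀ i : ℕ, 1 ≤ i → θ i = 0 := by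
      intro i hi
      have h1 : (i : ℝ) * θ i ≤ 0 := by
        have := Summable.le_tsum Sm i (fun j _ => mul_nonneg (Nat.cast_nonneg j) (hpos j))
        rw [hm.tsum_eq, ← hmz] at this
        exact this
      have h2 : 0 ≤ (i : ℝ) * θ i := mul_nonneg (Nat.cast_nonneg i) (hpos i)
      have : (i : ℝ) * θ i = 0 := le_antisymm h1 h2
      have hi' : (i : ℝ) ≠ 0 := Nat.cast_ne_zero.2 (by omega)
      exact (mul_eq_zero.1 this).resolve_left hi'
    have hθ0 : θ 0 = 1 := by
      have := hsum.tsum_eq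
      rw [tsum_eq_single 0 (fun i hi => hθz i (by omega))] at this
      exact this
    have hgconst : ∀ z : ℝ, g z = 1 := by
      intro z
      rw [hg z, tsum_eq_single 0 (fun i hi => by rw [hθz i (by omega)]; ring)]
      simp [hθ0]
    have hxone : ∀ r : ℕ, 1 ≤ r → g^[r] 0 = 1 := by
      intro r hr
      obtain ⟨s, rfl⟩ := Nat.exists_eq_add_of_le hr
      rw [add_comm, Function.iterate_succ_apply', hgconst]
    have hzero : ∀ᶠ r : ℕ in atTop,
        (g^[r - k + 1] 0 - g^[r - k] 0) / (g^[r + 1] 0 - g^[r] 0) = 0 := by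
      filter_upwards [eventually_ge_atTop (k + 1)] with r hr
      rw [hxone (r - k + 1) (by omega), hxone (r - k) (by omega)]
      simp
    have hlim : (1 : ℝ) / m ^ k = 0 := by
      rw [← hmz, zero_pow (by omega : k ≠ 0), div_zero]
    rw [hlim]
    exact Tendsto.congr' (hzero.mono fun r hr => hr.symm) tendsto_const_nhds
  · -- m > 0
    have hmne : m ≠ 0 := ne_of_gt hmpos
    -- there is some j ≥ 1 with θ j > 0
    obtain ⟨j₁, hj₁, hθj₁⟩ : ∃ j : ℕ, 1 ≤ j ∧ 0 < θ j := by
      by_contra hcon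
      push_neg at hcon
      have hz : (fun i : ℕ => (i : ℝ) * θ i) = fun _ => 0 := by
        funext i
        rcases Nat.eq_zero_or_pos i with h | h
        · simp [h]
        · have := le_antisymm (hcon i h) (hpos i)
          simp [this]
      rw [hz] at hm
      exact hmne (hasSum_zero.unique hm).symm
    -- g z < 1 for z < 1
    have hglt1 : ∀ z : ℝ, 0 ≤ z → z < 1 → g z < 1 := by
      intro z hz0 hz1
      have hrep : 1 - g z = ∑' i : ℕ, θ i * (1 - z ^ i) := by
        have := hdiff z 1 hz0 hz1.le zero_le_one le_rfl
        rw [g1] at this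
        simpa using this
      have hS : Summable (fun i : ℕ => θ i * (1 - z ^ i)) :=
        Summable.congr (Sθ.sub (Sg z hz0 hz1.le)) (fun i => by ring)
      have hterm : θ j₁ * (1 - z ^ j₁) ≤ ∑' i : ℕ, θ i * (1 - z ^ i) :=
        Summable.le_tsum hS j₁ (fun i _ =>
          mul_nonneg (hpos i) (sub_nonneg.2 (pow_le_one₀ hz0 hz1.le)))
      have hj : 0 < θ j₁ * (1 - z ^ j₁) :=
        mul_pos hθj₁ (sub_pos.2 (pow_lt_one₀ hz0 hz1 (by omega)))
      rw [← hrep] at hterm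
      linarith
    -- g z > z for z < 1
    have hgz : ∀ z : ℝ, 0 ≤ z → z < 1 → z < g z := by
      intro z hz0 hz1
      have hrep : 1 - g z = ∑' i : ℕ, θ i * (1 - z ^ i) := by
        have := hdiff z 1 hz0 hz1.le zero_le_one le_rfl
        rw [g1] at this
        simpa using this
      have hS : Summable (fun i : ℕ => θ i * (1 - z ^ i)) :=
        Summable.congr (Sθ.sub (Sg z hz0 hz1.le)) (fun i => by ring)
      have hS2 : Summable (fun i : ℕ => (i : ℝ) * θ i * (1 - z)) := Sm.mul_right _
      have hle : ∀ i : ℕ, θ i * (1 - z ^ i) ≤ (i : ℝ) * θ i * (1 - z) := by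
        intro i
        have h := (aux_pow hz0 hz1.le i).2
        simp only [one_pow] at h
        calc θ i * (1 - z ^ i) ≤ θ i * ((i : ℝ) * 1 ^ (i - 1) * (1 - z)) :=
              mul_le_mul_of_nonneg_left (by simpa using h) (hpos i)
          _ = (i : ℝ) * θ i * (1 - z) := by ring
      have hsum2 : ∑' i : ℕ, (i : ℝ) * θ i * (1 - z) = m * (1 - z) := by
        rw [tsum_mul_right, hm.tsum_eq]
      rcases lt_or_eq_of_le hsub with hmlt | hmeq
      · -- subcritical: nonstrict termwise estimate suffices
        have h2 := Summable.tsum_le_tsum hle hS hS2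
        rw [hsum2, ← hrep] at h2
        nlinarith [mul_pos (sub_pos.2 hmlt) (sub_pos.2 hz1)]
      · -- critical: need some θ j > 0 with j ≥ 2
        obtain ⟨j, hj2, hθj⟩ : ∃ j : ℕ, 2 ≤ j ∧ 0 < θ j := by
          by_contra hcon
          push_neg at hcon
          have hmθ1 : m = θ 1 := by
            rw [← hm.tsum_eq, tsum_eq_single 1 (fun i hi => ?_)]
            · simp
            · rcases Nat.eq_zero_or_pos i with h | h
              · simp [h]
              · have hi2 : 2 ≤ i := by omega
                have := le_antisymm (hcon i hi2) (hpos i)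
                simp [this]
          have hθ1 : θ 1 = 1 := by rw [← hmθ1, hmeq]
          have : θ 0 + θ 1 ≤ 1 := by
            have h := Summable.sum_le_tsum ({0, 1} : Finset ℕ) (fun i _ => hpos i) Sθ
            rw [hsum.tsum_eq] at h
            simpa using h
          linarith
        have hstrict : θ j * (1 - z ^ j) < (j : ℝ) * θ j * (1 - z) := by
          have h := aux_strict hz0 hz1 hj2
          calc θ j * (1 - z ^ j) < θ j * ((j : ℝ) * (1 - z)) :=
                mul_lt_mul_of_pos_left h hθj
            _ = (j : ℝ) * θ j * (1 - z) := by ring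
        have h2 := Summable.tsum_lt_tsum_of_nonneg
          (fun i => mul_nonneg (hpos i) (sub_nonneg.2 (pow_le_one₀ hz0 hz1.le)))
          hle hstrict hS2
        rw [hsum2, ← hrep, ← hmeq] at h2
        nlinarith [h2]
    -- x r < 1 for all r
    have hxlt1 : ∀ r : ℕ, g^[r] 0 < 1 := by
      intro r
      induction r with
      | zero => simp
      | succ r ih =>
        rw [Function.iterate_succ_apply']
        exact hglt1 _ (hx01 r).1 ih
    -- increments are positive
    have dpos : ∀ r : ℕ, 0 < g^[r + 1] 0 - g^[r] 0 := by
      intro r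
      rw [Function.iterate_succ_apply']
      exact sub_pos.2 (hgz _ (hx01 r).1 (hxlt1 r))
    -- x r → 1
    have hxlim : Tendsto (fun r : ℕ => g^[r] 0) atTop (𝓝 1) := by
      rcases tendsto_of_monotone hxmono with H | ⟨L, hL⟩
      · exfalso
        obtain ⟨r, hr⟩ := (tendsto_atTop.1 H 2).exists
        have := (hx01 r).2
        linarith
      have hxleL : ∀ r, g^[r] 0 ≤ L := hxmono.ge_of_tendsto hL
      have hL0 : (0 : ℝ) ≤ L := le_trans (hx01 0).1 (hxleL 0)
      have hL1 : L ≤ 1 := le_of_tendsto hL (Eventually.of_forall fun r => (hx01 r).2)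
      -- g L = L
      have hgL : Tendsto (fun r : ℕ => g (g^[r] 0)) atTop (𝓝 (g L)) := by
        have hsq : ∀ r : ℕ, ‖g (g^[r] 0) - g L‖ ≤ L - g^[r] 0 := by
          intro r
          have h := key (g^[r] 0) L (hx01 r).1 (hxleL r) hL1
          have hDleL := Dle L hL0 hL1
          have hdn : 0 ≤ L - g^[r] 0 := sub_nonneg.2 (hxleL r)
          rw [Real.norm_eq_abs, abs_sub_comm, abs_le]
          constructor
          · linarith [h.1, mul_nonneg (Dnn (g^[r] 0) (hx01 r).1) hdn]
          · linarith [h.2, mul_le_mul_of_nonneg_right hDleL hdn,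
              mul_le_mul_of_nonneg_right hsub hdn]
        have h0 : Tendsto (fun r : ℕ => L - g^[r] 0) atTop (𝓝 0) := by
          have h' : Tendsto (fun r : ℕ => L - g^[r] 0) atTop (𝓝 (L - L)) :=
            Tendsto.sub tendsto_const_nhds hL
          simpa using h'
        have := squeeze_zero_norm hsq h0
        simpa using tendsto_sub_nhds_zero_iff.1 this
      have hfix : g L = L := by
        have h1 : Tendsto (fun r : ℕ => g^[r + 1] 0) atTop (𝓝 L) :=
          hL.comp (tendsto_add_atTop_nat 1)
        have h2 : (fun r : ℕ => g^[r + 1] 0) = fun r : ℕ => g (g^[r] 0) :=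
          funext fun r => Function.iterate_succ_apply' g r 0
        rw [h2] at h1
        exact tendsto_nhds_unique hgL h1
      have hLeq : L = 1 := by
        by_contra hne
        have hLlt : L < 1 := lt_of_le_of_ne hL1 hne
        have := hgz L hL0 hLlt
        rw [hfix] at this
        exact lt_irrefl L this
      rwa [hLeq] at hL
    -- D (x r) → m via dominated convergence
    have hDlim : Tendsto (fun r : ℕ => D (g^[r] 0)) atTop (𝓝 m) := by
      have h := tendsto_tsum_of_dominated_convergence
        (f := fun (r : ℕ) (i : ℕ) => (i : ℝ) * θ i * (g^[r] 0) ^ (i - 1))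
        (g := fun i : ℕ => (i : ℝ) * θ i)
        (bound := fun i : ℕ => (i : ℝ) * θ i) Sm
        (fun i => by
          have : Tendsto (fun r : ℕ => (g^[r] 0) ^ (i - 1)) atTop (𝓝 1) := by
            have := ((continuous_pow (i - 1)).tendsto 1).comp hxlim
            simpa [Function.comp_def] using this
          have h2 := (tendsto_const_nhds : Tendsto (fun _ : ℕ => (i : ℝ) * θ i) atTop
            (𝓝 ((i : ℝ) * θ i))).mul this
          simpa using h2)
        (Eventually.of_forall fun r i => by
          rw [Real.norm_eq_abs, abs_of_nonneg
            (mul_nonneg (mul_nonneg (Nat.cast_nonneg i) (hpos i)) (pow_nonneg (hx01 r).1 _))]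
          exact mul_le_of_le_one_right (mul_nonneg (Nat.cast_nonneg i) (hpos i))
            (pow_le_one₀ (hx01 r).1 (hx01 r).2))
      rw [hm.tsum_eq] at h
      exact h
    have hDlim' : Tendsto (fun r : ℕ => D (g^[r + 1] 0)) atTop (𝓝 m) :=
      hDlim.comp (tendsto_add_atTop_nat 1)
    -- ratio of consecutive increments tends to m
    have hratio : Tendsto
        (fun r : ℕ => (g^[r + 1 + 1] 0 - g^[r + 1] 0) / (g^[r + 1] 0 - g^[r] 0))
        atTop (𝓝 m) := by
      refine tendsto_of_tendsto_of_tendsto_of_le_of_le hDlim hDlim'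
        (fun r => ?_) (fun r => ?_)
      · rw [le_div_iff₀ (dpos r)]
        exact (dkey r).1
      · rw [div_le_iff₀ (dpos r)]
        exact (dkey r).2
    exact aux_ratio (d := fun r : ℕ => g^[r + 1] 0 - g^[r] 0)
      (fun r => ne_of_gt (dpos r)) hmne hratio k
end
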